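/- Let M be a monoid (not necessarily commutative), V : ℕ → M, and for natural numbers a, b define P a b = V a * V (a+1) * ⋯ * V (b−1), with P a b = 1 when a ≥ b; ∸ denotes truncated natural subtraction. Define W : ℕ → ℕ → M by W 1 r = P (r ∸ 1) r (so W 1 r = V (r−1) for r ≥ 1), and for k ≥ 1: W (k+1) r = (if r > 2^{k−1} then W k (r − 2^{k−1}) * W k r else W k r). Then for every k ≥ 1 and every r: W k r = P (r ∸ 2^{k−1}) r. -/

import Mathlib

/-- The ordered product `V a * V (a+1) * ⋯ * V (b−1)` over indices in `[a, b)`,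
equal to `1` when `a ≥ b`. -/
def orderedProd {M : Type*} [Monoid M] (V : ℕ → M) (a b : ℕ) : M :=
  ((List.range' a (b - a)).map V).prod

lemma orderedProd_concat {M : Type*} [Monoid M] (V : ℕ → M) {a b c : ℕ}
    (hab : a ≤ b) (hbc : b ≤ c) :
    orderedProd V a b * orderedProd V b c = orderedProd V a c := by
  unfold orderedProd
  rw [← List.prod_append, ← List.map_append]
  have h : List.range' a (b - a) ++ List.range' b (c - b) = List.range' a (c - a) := by
    have := @List.range'_append a (b - a) (c - b) 1
    simp only [one_mul, mul_one] at this
    rw [Nat.add_sub_cancel' hab] at this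
    rw [this, Nat.add_comm (b - a), Nat.sub_add_sub_cancel hbc hab]
  rw [h]

/-- Invariant of the 1-doubling exclusive scan algorithm: with
`W 1 r = P (r ∸ 1) r` (so `W 1 r = V (r−1) for `r ≥ 1`) and, for `k ≥ 1`,
`W (k+1) r = W k (r − 2^{k−1}) * W k r` when `r > 2^{k−1}` (else unchanged),
after round `k ≥ 1` every processor `r` holds `W k r = P (r ∸ 2^{k−1}) r`. -/
theorem onedoubling_invariant {M : Type*} [Monoid M] (V : ℕ → M) (W : ℕ → ℕ → M)
    (h1 : ∀ r, W 1 r = orderedProd V (r - 1) r)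
    (hstep : ∀ k r, 1 ≤ k →
      W (k + 1) r =
        if 2 ^ (k - 1) < r then W k (r - 2 ^ (k - 1)) * W k r else W k r) :
    ∀ k r, 1 ≤ k → W k r = orderedProd V (r - 2 ^ (k - 1)) r := by
  intro k
  induction k with
  | zero => intro r h; omega
  | succ k ih =>
    intro r _
    rcases Nat.eq_zero_or_pos k with rfl | hk
    · simpa using h1 r
    · rw [hstep k r hk]
      have h2 : 2 ^ (k + 1 - 1) = 2 ^ (k - 1) + 2 ^ (k - 1) := by
        have hkk : k - 1 + 1 = k := by omega
        calc 2 ^ (k + 1 - 1) = 2 ^ (k - 1 + 1) := by rw [Nat.add_sub_cancel, hkk]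
          _ = _ := by rw [pow_succ]; ring
      split_ifs with h
      · rw [ih r hk, ih (r - 2 ^ (k - 1)) hk]
        rw [orderedProd_concat V (Nat.sub_le _ _) (Nat.sub_le _ _)]
        congr 1
        omega
      · rw [ih r hk]
        congr 1
        omega
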